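/- Assume R is irreducible and reduced, and let π ∈ E, π ≠ 0, be a minuscule weight for the dual root system R∨, i.e. ⟨π,α⟩ ∈ {0,1} for all α ∈ R⁺. For μ ∈ P⁺ and real q, t > 0 define ε_μ(q,t) = t^{⟨π,ρ⟩} Σ_{τ∈W(π)} t^{⟨τ,ρ⟩} q^{⟨τ,μ⟩} (real powers; the sum runs over the Weyl orbit of π). Then the Macdonald operator eigenvalues are regular: for any dominant weights λ, μ ∈ P⁺ with λ − μ ∈ Q⁺ and λ ≠ μ, there exist q, t ∈ (0,1) such that ε_μ(q,t) ≠ ε_λ(q,t). -/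

import Mathlib

open scoped RealInnerProductSpace

noncomputable section

variable {E : Type*} [NormedAddCommGroup E] [InnerProductSpace ℝ E]

/-- The coroot pairing `⟨x, α∨⟩ = 2⟨x,α⟩/⟨α,α⟩`. -/
def copair (α x : E) : ℝ := 2 * ⟪x, α⟫ / ⟪α, α⟫

/-- The orthogonal reflection `r_α(x) = x - ⟨x,α∨⟩α`. -/
def reflRoot (α x : E) : E := x - copair α x • α

/-- The set of reflections in the roots of `R`, as linear automorphisms. -/
def reflections (R : Finset E) : Set (E ≃ₗ[ℝ] E) :=
  {g | ∃ α ∈ R, ∀ x, g x = reflRoot α x}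

/-- The Weyl group of `R`. -/
def weylGroup (R : Finset E) : Subgroup (E ≃ₗ[ℝ] E) :=
  Subgroup.closure (reflections R)

/-- Membership in the weight lattice `P`. -/
def IsWeight (R : Finset E) (x : E) : Prop :=
  ∀ α ∈ R, ∃ z : ℤ, copair α x = (z : ℝ)

/-- Dominance: nonnegative pairing with all positive coroots. -/
def IsDominant (Rp : Finset E) (x : E) : Prop :=
  ∀ α ∈ Rp, 0 ≤ copair α x

/-- Membership in `Q⁺`, the nonnegative integer span of the positive roots. -/
def InQPlus (Rp : Finset E) (x : E) : Prop :=
  ∃ c : E → ℕ, x = ∑ α ∈ Rp, (c α : ℝ) • α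

/-- The Weyl orbit `W(x)` as a finset. -/
def weylOrbit [DecidableEq E] (R : Finset E) [Fintype (weylGroup R)] (x : E) : Finset E :=
  Finset.image (fun w : weylGroup R => (w : E ≃ₗ[ℝ] E) x) Finset.univ

/-! ### Auxiliary analytic lemmas -/

section Analytic

open Set Filter Topology

lemma sum_rpow_eval_one {ι : Type*} (s : Finset ι) (w e v d : ι → ℝ)
    (h : ∀ q ∈ Set.Ioo (0:ℝ) 1, ∑ i ∈ s, w i * q ^ e i = ∑ i ∈ s, v i * q ^ d i) :
    ∑ i ∈ s, w i = ∑ i ∈ s, v i := by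
  have hne : (𝓝[Set.Ioo (0:ℝ) 1] 1).NeBot := right_nhdsWithin_Ioo_neBot one_pos
  have key : ∀ (w e : ι → ℝ), Tendsto (fun q : ℝ => ∑ i ∈ s, w i * q ^ e i)
      (𝓝[Set.Ioo (0:ℝ) 1] 1) (𝓝 (∑ i ∈ s, w i)) := by
    intro w e
    have := tendsto_finset_sum (f := fun i (q : ℝ) => w i * q ^ e i) s
      (fun i _ => ((continuousAt_const.mul
        (Real.continuousAt_rpow_const 1 (e i)
          (Or.inl one_ne_zero))).continuousWithinAt (s := Set.Ioo (0:ℝ) 1)).tendsto)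
    simpa [Real.one_rpow] using this
  have h1 := key w e
  have h2 : Tendsto (fun q : ℝ => ∑ i ∈ s, w i * q ^ e i)
      (𝓝[Set.Ioo (0:ℝ) 1] 1) (𝓝 (∑ i ∈ s, v i)) :=
    (key v d).congr' (eventually_nhdsWithin_of_forall fun q hq => (h q hq).symm)
  exact tendsto_nhds_unique h1 h2

lemma sum_rpow_deriv {ι : Type*} (s : Finset ι) (w e v d : ι → ℝ)
    (h : ∀ q ∈ Set.Ioo (0:ℝ) 1, ∑ i ∈ s, w i * q ^ e i = ∑ i ∈ s, v i * q ^ d i) :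
    ∀ q ∈ Set.Ioo (0:ℝ) 1,
      ∑ i ∈ s, (w i * e i) * q ^ (e i - 1) = ∑ i ∈ s, (v i * d i) * q ^ (d i - 1) := by
  intro q hq
  have hq0 : q ≠ 0 := ne_of_gt hq.1
  have key : ∀ (w e : ι → ℝ), HasDerivAt (fun q : ℝ => ∑ i ∈ s, w i * q ^ e i)
      (∑ i ∈ s, (w i * e i) * q ^ (e i - 1)) q := by
    intro w e
    refine HasDerivAt.fun_sum fun i _ => ?_
    have := (Real.hasDerivAt_rpow_const (x := q) (p := e i) (Or.inl hq0)).const_mul (w i)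
    convert this using 1
    case e'_4 => rfl
    ring
  have hFG : (fun q : ℝ => ∑ i ∈ s, w i * q ^ e i)
      =ᶠ[nhds q] (fun q : ℝ => ∑ i ∈ s, v i * q ^ d i) :=
    Filter.eventually_of_mem (Ioo_mem_nhds hq.1 hq.2) h
  exact (key w e).unique ((key v d).congr_of_eventuallyEq hFG)

end Analytic

/-! ### Reflections and the Weyl group -/

lemma copair_add (α x y : E) : copair α (x + y) = copair α x + copair α y := by
  simp [copair, inner_add_left, mul_add, add_div]

lemma copair_smul (α : E) (r : ℝ) (x : E) : copair α (r • x) = r * copair α x := by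
  simp [copair, real_inner_smul_left]
  ring

lemma reflRoot_involutive (α : E) : Function.Involutive (reflRoot α) := by
  intro x
  by_cases hα : α = 0
  · simp [reflRoot, copair, hα]
  · have h : ⟪α, α⟫ ≠ 0 := inner_self_ne_zero.mpr hα
    have hc : copair α (reflRoot α x) = - copair α x := by
      simp only [reflRoot, copair, inner_sub_left, real_inner_smul_left]
      field_simp
      ring
    show reflRoot α x - copair α (reflRoot α x) • α = x
    rw [hc, neg_smul, sub_neg_eq_add]
    show x - copair α x • α + copair α x • α = x
    abel

def reflLM (α : E) : E →ₗ[ℝ] E where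
  toFun := reflRoot α
  map_add' x y := by
    simp only [reflRoot, copair_add, add_smul]
    abel
  map_smul' r x := by
    simp only [reflRoot, copair_smul, RingHom.id_apply, smul_sub, smul_smul]

def reflLE (α : E) : E ≃ₗ[ℝ] E :=
  LinearEquiv.ofInvolutive (reflLM α) (reflRoot_involutive α)

@[simp] lemma reflLE_apply (α x : E) : reflLE α x = reflRoot α x := rfl

lemma reflLE_mem (R : Finset E) {α : E} (hα : α ∈ R) : reflLE α ∈ weylGroup R :=
  Subgroup.subset_closure ⟨α, hα, fun _ => rfl⟩

lemma reflRoot_inner (α x y : E) : ⟪reflRoot α x, reflRoot α y⟫ = ⟪x, y⟫ := by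
  by_cases hα : α = 0
  · simp [reflRoot, copair, hα]
  · have h : ⟪α, α⟫ ≠ 0 := inner_self_ne_zero.mpr hα
    simp only [reflRoot, copair, inner_sub_left, inner_sub_right, real_inner_smul_left,
      real_inner_smul_right]
    rw [real_inner_comm α y]
    field_simp
    ring

lemma weylGroup_inner (R : Finset E) {w : E ≃ₗ[ℝ] E} (hw : w ∈ weylGroup R) :
    ∀ x y : E, ⟪w x, w y⟫ = ⟪x, y⟫ := by
  induction hw using Subgroup.closure_induction with
  | mem g hg =>
    obtain ⟨α, -, hgα⟩ := hg
    intro x y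
    rw [hgα, hgα]
    exact reflRoot_inner α x y
  | one => intro x y; rfl
  | mul a b ha hb iha ihb =>
    intro x y
    have : ∀ z, (a * b) z = a (b z) := fun z => rfl
    rw [this, this, iha, ihb]
  | inv a ha iha =>
    intro x y
    have h1 : ∀ z, a (a⁻¹ z) = z := fun z => a.apply_symm_apply z
    calc ⟪a⁻¹ x, a⁻¹ y⟫ = ⟪a (a⁻¹ x), a (a⁻¹ y)⟫ := (iha _ _).symm
    _ = ⟪x, y⟫ := by rw [h1, h1]

/-! ### The Weyl orbit -/

section Orbit

variable [DecidableEq E]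

lemma mem_weylOrbit_iff {R : Finset E} [Fintype (weylGroup R)] {π τ : E} :
    τ ∈ weylOrbit R π ↔ ∃ w : weylGroup R, (w : E ≃ₗ[ℝ] E) π = τ := by
  simp [weylOrbit]

lemma self_mem_weylOrbit {R : Finset E} [Fintype (weylGroup R)] (π : E) :
    π ∈ weylOrbit R π :=
  mem_weylOrbit_iff.mpr ⟨1, rfl⟩

lemma weylOrbit_image {R : Finset E} [Fintype (weylGroup R)] (π : E) {w : E ≃ₗ[ℝ] E}
    (hw : w ∈ weylGroup R) :
    Finset.image (fun τ => w τ) (weylOrbit R π) = weylOrbit R π := by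
  ext τ
  simp only [Finset.mem_image]
  constructor
  · rintro ⟨σ, hσ, rfl⟩
    obtain ⟨g, rfl⟩ := mem_weylOrbit_iff.mp hσ
    refine mem_weylOrbit_iff.mpr ⟨⟨w, hw⟩ * g, ?_⟩
    rfl
  · intro hτ
    obtain ⟨g, rfl⟩ := mem_weylOrbit_iff.mp hτ
    refine ⟨((⟨w, hw⟩⁻¹ * g : weylGroup R) : E ≃ₗ[ℝ] E) π,
      mem_weylOrbit_iff.mpr ⟨_, rfl⟩, ?_⟩
    show ((⟨w, hw⟩ * (⟨w, hw⟩⁻¹ * g) : weylGroup R) : E ≃ₗ[ℝ] E) π = _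
    rw [mul_inv_cancel_left]

lemma weylOrbit_sum {M : Type*} [AddCommMonoid M] {R : Finset E} [Fintype (weylGroup R)]
    (π : E) {w : E ≃ₗ[ℝ] E} (hw : w ∈ weylGroup R) (f : E → M) :
    ∑ τ ∈ weylOrbit R π, f (w τ) = ∑ τ ∈ weylOrbit R π, f τ := by
  conv_rhs => rw [← weylOrbit_image π hw]
  rw [Finset.sum_image (fun a _ b _ h => w.injective h)]

end Orbit

/-! ### Schur-type lemma: the orbit form is proportional to the inner product -/

lemma orbit_form_proportional [DecidableEq E] (R : Finset E) [Fintype (weylGroup R)]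
    (h0 : (0 : E) ∉ R)
    (hspan : Submodule.span ℝ (R : Set E) = ⊤)
    (hirr : ∀ R1 R2 : Finset E, Disjoint R1 R2 → R1 ∪ R2 = R →
      R1.Nonempty → R2.Nonempty → (∀ α ∈ R1, ∀ β ∈ R2, ⟪α, β⟫ = 0) → False)
    (π : E) (hπ0 : π ≠ 0) :
    ∃ c : ℝ, 0 < c ∧ ∀ x : E,
      (∑ τ ∈ weylOrbit R π, ⟪τ, x⟫ * ⟪τ, x⟫) = c * ⟪x, x⟫ := by
  classical
  haveI : FiniteDimensional ℝ E := by
    have h : FiniteDimensional ℝ (Submodule.span ℝ (R : Set E)) :=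
      FiniteDimensional.span_of_finite ℝ (R : Set E).toFinite
    rw [hspan] at h
    exact Submodule.topEquiv.finiteDimensional
  haveI : Nontrivial E := nontrivial_of_ne π 0 hπ0
  set O := weylOrbit R π with hO
  set T : E →ₗ[ℝ] E :=
    { toFun := fun x => ∑ τ ∈ O, ⟪τ, x⟫ • τ
      map_add' := fun x y => by
        simp [inner_add_right, add_smul, Finset.sum_add_distrib]
      map_smul' := fun r x => by
        simp [real_inner_smul_right, mul_smul, ← Finset.smul_sum] } with hT
  have hTB : ∀ x y : E, ⟪T x, y⟫ = ∑ τ ∈ O, ⟪τ, x⟫ * ⟪τ, y⟫ := by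
    intro x y
    simp [hT, sum_inner, real_inner_smul_left]
  have hsymm : T.IsSymmetric := by
    intro x y
    rw [hTB, real_inner_comm, hTB]
    exact Finset.sum_congr rfl fun τ _ => mul_comm _ _
  have hcomm : ∀ w : E ≃ₗ[ℝ] E, w ∈ weylGroup R → ∀ x : E, T (w x) = w (T x) := by
    intro w hw x
    have h1 : T (w x) = ∑ τ ∈ O, ⟪w τ, w x⟫ • (w τ) :=
      (weylOrbit_sum π hw (fun τ => (⟪τ, w x⟫ : ℝ) • τ)).symm
    rw [h1]
    have h2 : ∀ τ ∈ O, (⟪w τ, w x⟫ : ℝ) • (w τ) = w (⟪τ, x⟫ • τ) := by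
      intro τ _
      rw [weylGroup_inner R hw, map_smul]
    rw [Finset.sum_congr rfl h2, ← map_sum]
    rfl
  obtain ⟨c, hc⟩ : ∃ c : ℝ, Module.End.HasEigenvalue T c :=
    ⟨_, hsymm.hasEigenvalue_iSup_of_finiteDimensional⟩
  set U := Module.End.eigenspace T c with hU
  have hUinv : ∀ w : E ≃ₗ[ℝ] E, w ∈ weylGroup R → ∀ x ∈ U, w x ∈ U := by
    intro w hw x hx
    rw [hU, Module.End.mem_eigenspace_iff] at hx ⊢
    rw [hcomm w hw, hx, map_smul]
  have hR2 : ∀ α ∈ R, α ∉ U → ∀ u ∈ U, ⟪u, α⟫ = 0 := by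
    intro α hα hαU u hu
    have hαα : ⟪α, α⟫ ≠ 0 := inner_self_ne_zero.mpr (fun h => h0 (h ▸ hα))
    have h2 : reflRoot α u ∈ U := hUinv _ (reflLE_mem R hα) u hu
    have h3 : copair α u • α ∈ U := by
      have := U.sub_mem hu h2
      simpa [reflRoot] using this
    by_cases hcu : copair α u = 0
    · have : 2 * ⟪u, α⟫ / ⟪α, α⟫ = 0 := hcu
      field_simp at this
      linarith
    · exfalso
      apply hαU
      have : (copair α u)⁻¹ • (copair α u • α) ∈ U := U.smul_mem _ h3
      rwa [smul_smul, inv_mul_cancel₀ hcu, one_smul] at this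
  have hUtop : U = ⊤ := by
    by_cases h2e : R.filter (fun α => α ∉ U) = ∅
    · rw [eq_top_iff, ← hspan, Submodule.span_le]
      intro α hα
      by_contra hc'
      exact (Finset.filter_eq_empty_iff.mp h2e) hα hc'
    · by_cases h1e : R.filter (fun α => α ∈ U) = ∅
      · exfalso
        obtain ⟨u, hu, hu0⟩ := Submodule.exists_mem_ne_zero_of_ne_bot hc
        have hall : ∀ α ∈ R, ⟪u, α⟫ = 0 := by
          intro α hα
          exact hR2 α hα ((Finset.filter_eq_empty_iff.mp h1e) hα) u hu
        have hle : Submodule.span ℝ (R : Set E) ≤ (ℝ ∙ u)ᗮ := by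
          rw [Submodule.span_le]
          intro α hα
          exact Submodule.mem_orthogonal_singleton_iff_inner_right.mpr (hall α hα)
        rw [hspan] at hle
        have : ⟪u, u⟫ = 0 :=
          Submodule.mem_orthogonal_singleton_iff_inner_right.mp (hle trivial)
        exact hu0 (inner_self_eq_zero.mp this)
      · exfalso
        refine hirr (R.filter (fun α => α ∈ U)) (R.filter (fun α => α ∉ U))
          (Finset.disjoint_filter_filter_not R R _)
          (Finset.filter_union_filter_not_eq _ R)
          (Finset.nonempty_iff_ne_empty.mpr h1e)
          (Finset.nonempty_iff_ne_empty.mpr h2e) ?_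
        intro α hα β hβ
        rw [Finset.mem_filter] at hα hβ
        exact hR2 β hβ.1 hβ.2 α hα.2
  have hTc : ∀ x : E, T x = c • x := by
    intro x
    have : x ∈ U := by rw [hUtop]; trivial
    exact Module.End.mem_eigenspace_iff.mp this
  have hform : ∀ x : E, (∑ τ ∈ O, ⟪τ, x⟫ * ⟪τ, x⟫) = c * ⟪x, x⟫ := by
    intro x
    rw [← hTB, hTc, real_inner_smul_left]
  refine ⟨c, ?_, hform⟩
  have hππ : (0 : ℝ) < ⟪π, π⟫ :=
    lt_of_le_of_ne real_inner_self_nonneg (Ne.symm (inner_self_ne_zero.mpr hπ0))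
  have hsq : ⟪π, π⟫ * ⟪π, π⟫ ≤ ∑ τ ∈ O, ⟪τ, π⟫ * ⟪τ, π⟫ :=
    Finset.single_le_sum (f := fun τ => (⟪τ, π⟫ : ℝ) * ⟪τ, π⟫)
      (fun τ _ => mul_self_nonneg _) (self_mem_weylOrbit π)
  rw [hform π] at hsq
  nlinarith

/-- **Regularity of the Macdonald operator eigenvalues.**  For an irreducible
reduced root system with a minuscule weight `π ≠ 0` of the dual root system,
and dominant weights `μ ≺ λ`, the eigenvalues
`ε_μ(q,t) = t^{⟨π,ρ⟩} Σ_{τ∈W(π)} t^{⟨τ,ρ⟩} q^{⟨τ,μ⟩}` and `ε_λ(q,t)` are not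
identically equal: some `q, t ∈ (0,1)` separates them. -/
theorem macdonald_eigenvalue_regularity
    [DecidableEq E] (R Rp : Finset E) [Fintype (weylGroup R)]
    (h0 : (0 : E) ∉ R)
    (hspan : Submodule.span ℝ (R : Set E) = ⊤)
    (hcrys : ∀ α ∈ R, ∀ β ∈ R, ∃ z : ℤ, copair α β = (z : ℝ))
    (hrc : ∀ α ∈ R, ∀ β ∈ R, reflRoot α β ∈ R)
    (hred : ∀ α ∈ R, (2 : ℝ) • α ∉ R)
    (hirr : ∀ R1 R2 : Finset E, Disjoint R1 R2 → R1 ∪ R2 = R →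
      R1.Nonempty → R2.Nonempty → (∀ α ∈ R1, ∀ β ∈ R2, ⟪α, β⟫ = 0) → False)
    (f : E →ₗ[ℝ] ℝ) (hf : ∀ α ∈ R, f α ≠ 0)
    (hRp : ∀ α, α ∈ Rp ↔ α ∈ R ∧ 0 < f α)
    (ρ : E) (hρ : ρ = (2⁻¹ : ℝ) • ∑ α ∈ Rp, α)
    (π : E) (hπ0 : π ≠ 0) (hπ : ∀ α ∈ Rp, ⟪π, α⟫ = 0 ∨ ⟪π, α⟫ = 1)
    (lam μ : E)
    (hlamP : IsWeight R lam) (hlamD : IsDominant Rp lam)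
    (hμP : IsWeight R μ) (hμD : IsDominant Rp μ)
    (hQ : InQPlus Rp (lam - μ)) (hne : lam ≠ μ) :
    ∃ q t : ℝ, q ∈ Set.Ioo (0 : ℝ) 1 ∧ t ∈ Set.Ioo (0 : ℝ) 1 ∧
      t ^ ⟪π, ρ⟫ * ∑ τ ∈ weylOrbit R π, t ^ ⟪τ, ρ⟫ * q ^ ⟪τ, μ⟫ ≠
        t ^ ⟪π, ρ⟫ * ∑ τ ∈ weylOrbit R π, t ^ ⟪τ, ρ⟫ * q ^ ⟪τ, lam⟫ := by
  classical
  by_contra hcon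
  push_neg at hcon
  -- Step 1: cancel the prefactor and symmetrize.
  have h1 : ∀ q ∈ Set.Ioo (0:ℝ) 1, ∀ t ∈ Set.Ioo (0:ℝ) 1,
      ∑ τ ∈ weylOrbit R π, (q ^ ⟪τ, μ⟫) * t ^ ⟪τ, ρ⟫ =
        ∑ τ ∈ weylOrbit R π, (q ^ ⟪τ, lam⟫) * t ^ ⟪τ, ρ⟫ := by
    intro q hq t ht
    have h := hcon q t hq ht
    have h' := mul_left_cancel₀ (Real.rpow_pos_of_pos ht.1 ⟪π, ρ⟫).ne' h
    calc ∑ τ ∈ weylOrbit R π, (q ^ ⟪τ, μ⟫) * t ^ ⟪τ, ρ⟫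
        = ∑ τ ∈ weylOrbit R π, t ^ ⟪τ, ρ⟫ * q ^ ⟪τ, μ⟫ :=
          Finset.sum_congr rfl fun τ _ => mul_comm _ _
      _ = ∑ τ ∈ weylOrbit R π, t ^ ⟪τ, ρ⟫ * q ^ ⟪τ, lam⟫ := h'
      _ = _ := Finset.sum_congr rfl fun τ _ => mul_comm _ _
  -- Step 2: let t → 1.
  have h2 : ∀ q ∈ Set.Ioo (0:ℝ) 1,
      ∑ τ ∈ weylOrbit R π, (1:ℝ) * q ^ ⟪τ, μ⟫ =
        ∑ τ ∈ weylOrbit R π, (1:ℝ) * q ^ ⟪τ, lam⟫ := by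
    intro q hq
    have := sum_rpow_eval_one (weylOrbit R π)
      (fun τ => q ^ ⟪τ, μ⟫) (fun τ => ⟪τ, ρ⟫)
      (fun τ => q ^ ⟪τ, lam⟫) (fun τ => ⟪τ, ρ⟫) (h1 q hq)
    simpa [one_mul] using this
  -- Step 3: differentiate twice in q and evaluate at q = 1.
  have h3 := sum_rpow_deriv (weylOrbit R π) _ _ _ _ h2
  have h4 : ∑ τ ∈ weylOrbit R π, ⟪τ, μ⟫ = ∑ τ ∈ weylOrbit R π, ⟪τ, lam⟫ := by
    have := sum_rpow_eval_one (weylOrbit R π) _ _ _ _ h3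
    simpa [one_mul] using this
  have h5 := sum_rpow_deriv (weylOrbit R π) _ _ _ _ h3
  have h6 := sum_rpow_eval_one (weylOrbit R π) _ _ _ _ h5
  have hsq : ∑ τ ∈ weylOrbit R π, ⟪τ, μ⟫ * ⟪τ, μ⟫ =
      ∑ τ ∈ weylOrbit R π, ⟪τ, lam⟫ * ⟪τ, lam⟫ := by
    have e1 : ∑ τ ∈ weylOrbit R π, ⟪τ, μ⟫ * ⟪τ, μ⟫ =
        (∑ τ ∈ weylOrbit R π, (1:ℝ) * ⟪τ, μ⟫ * (⟪τ, μ⟫ - 1)) +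
          ∑ τ ∈ weylOrbit R π, ⟪τ, μ⟫ := by
      rw [← Finset.sum_add_distrib]
      exact Finset.sum_congr rfl fun τ _ => by ring
    have e2 : ∑ τ ∈ weylOrbit R π, ⟪τ, lam⟫ * ⟪τ, lam⟫ =
        (∑ τ ∈ weylOrbit R π, (1:ℝ) * ⟪τ, lam⟫ * (⟪τ, lam⟫ - 1)) +
          ∑ τ ∈ weylOrbit R π, ⟪τ, lam⟫ := by
      rw [← Finset.sum_add_distrib]
      exact Finset.sum_congr rfl fun τ _ => by ring
    rw [e1, e2, h4, h6]
  -- Step 4: conclude ‖μ‖ = ‖λ‖ via the Schur-type lemma.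
  obtain ⟨c, hcpos, hform⟩ := orbit_form_proportional R h0 hspan hirr π hπ0
  have hnorm : ⟪μ, μ⟫ = ⟪lam, lam⟫ := by
    have : c * ⟪μ, μ⟫ = c * ⟪lam, lam⟫ := by rw [← hform μ, ← hform lam]; exact hsq
    exact mul_left_cancel₀ hcpos.ne' this
  -- Step 5: geometry of dominant weights.
  obtain ⟨co, hco⟩ := hQ
  have hRpos : ∀ α ∈ Rp, (0:ℝ) < ⟪α, α⟫ := by
    intro α hα
    have hαR : α ∈ R := ((hRp α).mp hα).1
    have hα0 : α ≠ 0 := fun h => h0 (h ▸ hαR)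
    exact lt_of_le_of_ne real_inner_self_nonneg (Ne.symm (inner_self_ne_zero.mpr hα0))
  have hdom : ∀ x : E, IsDominant Rp x → 0 ≤ ⟪x, lam - μ⟫ := by
    intro x hx
    rw [hco, inner_sum]
    refine Finset.sum_nonneg fun α hα => ?_
    rw [real_inner_smul_right]
    have h1' := hx α hα
    simp only [copair] at h1'
    have h2' := hRpos α hα
    have hxa : 0 ≤ ⟪x, α⟫ := by
      have h3' : 0 ≤ 2 * ⟪x, α⟫ := by
        have := mul_nonneg h1' h2'.le
        rwa [div_mul_cancel₀ _ h2'.ne'] at this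
      linarith
    exact mul_nonneg (Nat.cast_nonneg _) hxa
  have hl := hdom lam hlamD
  have hm := hdom μ hμD
  have hcomm' : ⟪lam, μ⟫ = ⟪μ, lam⟫ := real_inner_comm _ _
  have hkey : ⟪lam, lam - μ⟫ + ⟪μ, lam - μ⟫ = 0 := by
    rw [inner_sub_right, inner_sub_right]
    linarith
  have hzero : ⟪lam - μ, lam - μ⟫ = 0 := by
    rw [inner_sub_left]
    linarith
  exact hne (sub_eq_zero.mp (inner_self_eq_zero.mp hzero))
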